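/- arXiv:1105.0873 — 2 statements merged into one kernel-verified Lean document; each statement's English description precedes it below -/
import Mathlib

section
/- For the Euclidean weight W(x) = |x| − (1+|x|)^{1−2σ} on ℝⁿ with n ≥ 3 and 0 < σ < 1/2, there exist constants C, c > 0 such that on ℝⁿ ∖ {0}: |x||ΔW| + |∇W| ≤ C, −Δ²W ≥ c(1+|x|)^{−3−2σ}, and Hess(W) ≥ c(1+|x|)^{−1−2σ} Id as quadratic forms (away from the origin). -/
open MeasureTheory Filter

noncomputable def pd {n : ℕ} {F : Type*} [NormedAddCommGroup F] [NormedSpace ℝ F]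
    (f : EuclideanSpace ℝ (Fin n) → F) (i : Fin n) (x : EuclideanSpace ℝ (Fin n)) : F :=
  fderiv ℝ f x (EuclideanSpace.single i 1)

noncomputable def lap {n : ℕ} {F : Type*} [NormedAddCommGroup F] [NormedSpace ℝ F]
    (f : EuclideanSpace ℝ (Fin n) → F) (x : EuclideanSpace ℝ (Fin n)) : F :=
  ∑ i, pd (fun y => pd f i y) i x

open scoped RealInnerProductSpace Topology

/-!
`W` is the radial function with profile `f(t) = t - (1 + t) ^ a`, `a = 1 - 2σ ∈ (0, 1)`. For a
radial function the Hessian is `f''(r)` in the radial direction and `f'(r) / r` in the tangential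
ones, so `ΔW = f'' + (n - 1) f' / r` and
`Δ²W = f'''' + 2 (n - 1) f''' / r + (n - 1) (n - 3) (f'' / r² - f' / r³)`.
Everything rests on `r f''(r) ≤ f'(r)`: it makes `f''` the smallest eigenvalue of the Hessian
and gives the `(n - 3)` term of `-Δ²W` the right sign for `n ≥ 3`; the remaining terms are
`-f'''' - 2 (n - 1) f''' / r`, where `f''' < 0` dominates because `1 / r ≥ 1 / (1 + r)`.
-/

theorem hasFDerivAt_norm_of_ne_zero {E : Type*} [NormedAddCommGroup E] [InnerProductSpace ℝ E]
    {x : E} (hx : x ≠ 0) : HasFDerivAt (fun y : E => ‖y‖) (‖x‖⁻¹ • innerSL ℝ x) x := by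
  have hsqrt := (Real.hasDerivAt_sqrt (pow_pos (norm_pos_iff.2 hx) 2).ne').comp_hasFDerivAt x
    (hasStrictFDerivAt_norm_sq x).hasFDerivAt
  simp only [Function.comp_def, Real.sqrt_sq (norm_nonneg _)] at hsqrt
  refine hsqrt.congr_fderiv (ContinuousLinearMap.ext fun v => ?_)
  simp only [smul_apply, smul_eq_mul, nsmul_eq_mul, Nat.cast_ofNat]
  field_simp

theorem HasDerivAt.hasFDerivAt_comp_norm {E : Type*} [NormedAddCommGroup E]
    [InnerProductSpace ℝ E] {f : ℝ → ℝ} {d : ℝ} {x : E} (hf : HasDerivAt f d ‖x‖) (hx : x ≠ 0) :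
    HasFDerivAt (fun y => f ‖y‖) ((d / ‖x‖) • innerSL ℝ x) x := by
  simpa only [Function.comp_def, smul_smul, div_eq_mul_inv] using
    hf.comp_hasFDerivAt x (hasFDerivAt_norm_of_ne_zero hx)

section Radial

variable {n : ℕ} {x : EuclideanSpace ℝ (Fin n)}

theorem inner_single_one_right (x : EuclideanSpace ℝ (Fin n)) (i : Fin n) :
    ⟪x, EuclideanSpace.single i (1 : ℝ)⟫ = x i := by
  simp [EuclideanSpace.inner_single_right]

theorem pd_comp_norm {f : ℝ → ℝ} {d : ℝ} (hf : HasDerivAt f d ‖x‖) (hx : x ≠ 0) (i : Fin n) :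
    pd (fun y => f ‖y‖) i x = d / ‖x‖ * x i := by
  simp [pd, (hf.hasFDerivAt_comp_norm hx).fderiv, inner_single_one_right]

theorem pd_congr_of_eventuallyEq {F G : EuclideanSpace ℝ (Fin n) → ℝ} (h : F =ᶠ[𝓝 x] G)
    (i : Fin n) : pd F i x = pd G i x := by
  rw [pd, pd, h.fderiv_eq]

theorem lap_congr_of_eventuallyEq {F G : EuclideanSpace ℝ (Fin n) → ℝ} (h : F =ᶠ[𝓝 x] G) :
    lap F x = lap G x :=
  Finset.sum_congr rfl fun i _ => pd_congr_of_eventuallyEq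
    (h.eventuallyEq_nhds.mono fun _ hy => pd_congr_of_eventuallyEq hy i) i

noncomputable def hessForm (F : EuclideanSpace ℝ (Fin n) → ℝ) (x v : EuclideanSpace ℝ (Fin n)) :
    ℝ :=
  ∑ j, ∑ k, pd (fun y => pd F k y) j x * v j * v k

variable {f f₁ f₂ : ℝ → ℝ}

theorem pd_pd_comp_norm (h₁ : ∀ t, 0 < t → HasDerivAt f (f₁ t) t)
    (h₂ : ∀ t, 0 < t → HasDerivAt f₁ (f₂ t) t) (hx : x ≠ 0) (i j : Fin n) :
    pd (fun y => pd (fun z => f ‖z‖) i y) j x =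
      (f₂ ‖x‖ - f₁ ‖x‖ / ‖x‖) / ‖x‖ ^ 2 * (x i * x j) + f₁ ‖x‖ / ‖x‖ * if i = j then 1 else 0 := by
  have hr := norm_pos_iff.2 hx
  have hquot : ∀ t, 0 < t → HasDerivAt (fun s => f₁ s / s) ((f₂ t * t - f₁ t) / t ^ 2) t :=
    fun t ht => by simpa using (h₂ t ht).fun_div (hasDerivAt_id' t) ht.ne'
  have hloc : (fun y => pd (fun z => f ‖z‖) i y) =ᶠ[𝓝 x] fun y => f₁ ‖y‖ / ‖y‖ * y i := by
    filter_upwards [isOpen_compl_singleton.mem_nhds hx] with y hy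
    exact pd_comp_norm (h₁ _ (norm_pos_iff.2 hy)) hy i
  have hprod : HasFDerivAt (fun y : EuclideanSpace ℝ (Fin n) => f₁ ‖y‖ / ‖y‖ * y i) _ x :=
    ((hquot _ hr).hasFDerivAt_comp_norm hx).fun_mul
      (EuclideanSpace.proj i : EuclideanSpace ℝ (Fin n) →L[ℝ] ℝ).hasFDerivAt
  rw [pd, hloc.fderiv_eq, hprod.fderiv]
  simp only [add_apply, smul_apply, innerSL_apply_apply,
    inner_single_one_right, PiLp.proj_apply, PiLp.single_apply, smul_eq_mul]
  split_ifs with hij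
  · subst hij; field_simp; ring
  · field_simp; ring

theorem sum_sq_pd_comp_norm {d : ℝ} (hf : HasDerivAt f d ‖x‖) (hx : x ≠ 0) :
    ∑ i, pd (fun y => f ‖y‖) i x ^ 2 = d ^ 2 := by
  have hr := (norm_pos_iff.2 hx).ne'
  simp_rw [pd_comp_norm hf hx, mul_pow, ← Finset.mul_sum, ← EuclideanSpace.real_norm_sq_eq]
  field_simp

theorem lap_comp_norm (h₁ : ∀ t, 0 < t → HasDerivAt f (f₁ t) t)
    (h₂ : ∀ t, 0 < t → HasDerivAt f₁ (f₂ t) t) (hx : x ≠ 0) :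
    lap (fun y => f ‖y‖) x = f₂ ‖x‖ + (n - 1) * (f₁ ‖x‖ / ‖x‖) := by
  have hr := (norm_pos_iff.2 hx).ne'
  simp only [lap, pd_pd_comp_norm h₁ h₂ hx, if_true, mul_one, Finset.sum_add_distrib,
    ← Finset.mul_sum, ← sq, ← EuclideanSpace.real_norm_sq_eq, Finset.sum_const,
    Finset.card_univ, Fintype.card_fin, nsmul_eq_mul]
  field_simp
  ring

theorem hessForm_comp_norm (h₁ : ∀ t, 0 < t → HasDerivAt f (f₁ t) t)
    (h₂ : ∀ t, 0 < t → HasDerivAt f₁ (f₂ t) t) (hx : x ≠ 0) (v : EuclideanSpace ℝ (Fin n)) :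
    hessForm (fun z => f ‖z‖) x v =
      (f₂ ‖x‖ - f₁ ‖x‖ / ‖x‖) / ‖x‖ ^ 2 * ⟪x, v⟫ ^ 2 + f₁ ‖x‖ / ‖x‖ * ‖v‖ ^ 2 := by
  set A := (f₂ ‖x‖ - f₁ ‖x‖ / ‖x‖) / ‖x‖ ^ 2
  set B := f₁ ‖x‖ / ‖x‖
  have hterm : ∀ j k, pd (fun y => pd (fun z => f ‖z‖) k y) j x * v j * v k =
      A * ((x j * v j) * (x k * v k)) + B * if k = j then v j ^ 2 else 0 := by
    intro j k
    rw [pd_pd_comp_norm h₁ h₂ hx]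
    split_ifs with hkj
    · subst hkj; ring
    · ring
  have hinner : ⟪x, v⟫ = ∑ j, x j * v j := by simp [PiLp.inner_apply, mul_comm]
  simp only [hessForm, hterm, Finset.sum_add_distrib, ← Finset.mul_sum, Finset.sum_ite_eq',
    Finset.mem_univ, if_true, ← Finset.sum_mul, hinner, EuclideanSpace.real_norm_sq_eq]
  ring

theorem le_hessForm_comp_norm (h₁ : ∀ t, 0 < t → HasDerivAt f (f₁ t) t)
    (h₂ : ∀ t, 0 < t → HasDerivAt f₁ (f₂ t) t) (hx : x ≠ 0) (hle : f₂ ‖x‖ ≤ f₁ ‖x‖ / ‖x‖)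
    (v : EuclideanSpace ℝ (Fin n)) :
    f₂ ‖x‖ * ‖v‖ ^ 2 ≤ hessForm (fun z => f ‖z‖) x v := by
  have hr := norm_pos_iff.2 hx
  have hcs : ⟪x, v⟫ ^ 2 / ‖x‖ ^ 2 ≤ ‖v‖ ^ 2 := by
    rw [div_le_iff₀ (by positivity), ← sq_abs, ← mul_pow, mul_comm ‖v‖]
    exact pow_le_pow_left₀ (abs_nonneg _) (abs_real_inner_le_norm x v) 2
  have hsplit : (f₂ ‖x‖ - f₁ ‖x‖ / ‖x‖) / ‖x‖ ^ 2 * ⟪x, v⟫ ^ 2 + f₁ ‖x‖ / ‖x‖ * ‖v‖ ^ 2 =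
      f₂ ‖x‖ * ‖v‖ ^ 2 + (f₁ ‖x‖ / ‖x‖ - f₂ ‖x‖) * (‖v‖ ^ 2 - ⟪x, v⟫ ^ 2 / ‖x‖ ^ 2) := by
    field_simp
    ring
  rw [hessForm_comp_norm h₁ h₂ hx, hsplit]
  exact le_add_of_nonneg_right (mul_nonneg (sub_nonneg.2 hle) (sub_nonneg.2 hcs))

theorem lap_lap_comp_norm {f₃ f₄ : ℝ → ℝ} (h₁ : ∀ t, 0 < t → HasDerivAt f (f₁ t) t)
    (h₂ : ∀ t, 0 < t → HasDerivAt f₁ (f₂ t) t) (h₃ : ∀ t, 0 < t → HasDerivAt f₂ (f₃ t) t)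
    (h₄ : ∀ t, 0 < t → HasDerivAt f₃ (f₄ t) t) (hx : x ≠ 0) :
    lap (fun y => lap (fun z => f ‖z‖) y) x = f₄ ‖x‖ + 2 * (n - 1) * (f₃ ‖x‖ / ‖x‖) +
      (n - 1) * (n - 3) * (f₂ ‖x‖ / ‖x‖ ^ 2 - f₁ ‖x‖ / ‖x‖ ^ 3) := by
  have hr := (norm_pos_iff.2 hx).ne'
  have hloc : (fun y => lap (fun z => f ‖z‖) y) =ᶠ[𝓝 x]
      fun y => f₂ ‖y‖ + (n - 1) * (f₁ ‖y‖ / ‖y‖) := by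
    filter_upwards [isOpen_compl_singleton.mem_nhds hx] with y hy
    exact lap_comp_norm h₁ h₂ hy
  have hg₁ : ∀ t, 0 < t → HasDerivAt (fun s => f₂ s + (n - 1) * (f₁ s / s))
      (f₃ t + (n - 1) * (f₂ t / t - f₁ t / t ^ 2)) t := fun t ht =>
    ((h₃ t ht).add (((h₂ t ht).fun_div (hasDerivAt_id' t) ht.ne').const_mul _)).congr_deriv
      (by field_simp)
  have hg₂ : ∀ t, 0 < t → HasDerivAt (fun s => f₃ s + (n - 1) * (f₂ s / s - f₁ s / s ^ 2))
      (f₄ t + (n - 1) * (f₃ t / t - 2 * f₂ t / t ^ 2 + 2 * f₁ t / t ^ 3)) t := fun t ht =>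
    ((h₄ t ht).add ((((h₃ t ht).fun_div (hasDerivAt_id' t) ht.ne').sub
      ((h₂ t ht).fun_div (hasDerivAt_pow 2 t) (by positivity))).const_mul _)).congr_deriv
      (by field_simp; ring)
  rw [lap_congr_of_eventuallyEq hloc, lap_comp_norm hg₁ hg₂ hx]
  field_simp
  ring

end Radial

theorem hasDerivAt_one_add_rpow (p : ℝ) {t : ℝ} (ht : 0 < 1 + t) :
    HasDerivAt (fun s => (1 + s) ^ p) (p * (1 + t) ^ (p - 1)) t := by
  simpa using ((hasDerivAt_id' t).const_add 1).rpow_const (p := p) (Or.inl ht.ne')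

noncomputable def weightProfile (a t : ℝ) : ℝ := t - (1 + t) ^ a

section WeightProfile

variable {a t : ℝ}

theorem hasDerivAt_weightProfile (ht : 0 < 1 + t) :
    HasDerivAt (weightProfile a) (1 - a * (1 + t) ^ (a - 1)) t :=
  (hasDerivAt_id' t).fun_sub (hasDerivAt_one_add_rpow a ht)

theorem hasDerivAt_weightProfile_deriv (ht : 0 < 1 + t) :
    HasDerivAt (fun s => 1 - a * (1 + s) ^ (a - 1)) (a * (1 - a) * (1 + t) ^ (a - 2)) t :=
  (((hasDerivAt_one_add_rpow (a - 1) ht).const_mul a).const_sub 1).congr_deriv (by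
    rw [show a - 1 - 1 = a - 2 by ring]; ring)

theorem hasDerivAt_weightProfile_deriv2 (ht : 0 < 1 + t) :
    HasDerivAt (fun s => a * (1 - a) * (1 + s) ^ (a - 2))
      (-(a * (1 - a) * (2 - a)) * (1 + t) ^ (a - 3)) t :=
  ((hasDerivAt_one_add_rpow (a - 2) ht).const_mul (a * (1 - a))).congr_deriv (by
    rw [show a - 2 - 1 = a - 3 by ring]; ring)

theorem hasDerivAt_weightProfile_deriv3 (ht : 0 < 1 + t) :
    HasDerivAt (fun s => -(a * (1 - a) * (2 - a)) * (1 + s) ^ (a - 3))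
      (a * (1 - a) * (2 - a) * (3 - a) * (1 + t) ^ (a - 4)) t :=
  ((hasDerivAt_one_add_rpow (a - 3) ht).const_mul (-(a * (1 - a) * (2 - a)))).congr_deriv (by
    rw [show a - 3 - 1 = a - 4 by ring]; ring)

end WeightProfile

section WeightProfileBounds

variable {a r : ℝ}

theorem weightProfile_deriv_le_one (ha : 0 ≤ a) (hr : 0 ≤ r) : 1 - a * (1 + r) ^ (a - 1) ≤ 1 := by
  have : 0 ≤ (1 + r) ^ (a - 1) := Real.rpow_nonneg (by linarith) _
  nlinarith

theorem mul_weightProfile_deriv2_le_deriv (ha₀ : 0 ≤ a) (ha₁ : a ≤ 1) (hr : 0 ≤ r) :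
    r * (a * (1 - a) * (1 + r) ^ (a - 2)) ≤ 1 - a * (1 + r) ^ (a - 1) := by
  have h1r : 0 < 1 + r := by linarith
  have hdecay : (1 + r) ^ (a - 1) ≤ 1 :=
    Real.rpow_le_one_of_one_le_of_nonpos (by linarith) (by linarith)
  have hmul : r * (1 + r) ^ (a - 2) ≤ 1 :=
    calc r * (1 + r) ^ (a - 2) ≤ (1 + r) * (1 + r) ^ (a - 2) := by
          gcongr
          linarith
      _ = (1 + r) ^ (a - 1) := by
          rw [show a - 1 = 1 + (a - 2) by ring, Real.rpow_add h1r, Real.rpow_one]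
      _ ≤ 1 := hdecay
  have ha : 0 ≤ a * (1 - a) := mul_nonneg ha₀ (by linarith)
  nlinarith [mul_le_mul_of_nonneg_left hmul ha, mul_le_mul_of_nonneg_left hdecay ha₀]

theorem weightProfile_neg_bilap_lower_bound {m : ℝ} (hm : 3 ≤ m) (ha₀ : 0 < a) (ha₁ : a < 1)
    (hr : 0 < r) :
    a * (1 - a) * (1 + r) ^ (a - 4) ≤
      -(a * (1 - a) * (2 - a) * (3 - a) * (1 + r) ^ (a - 4) +
        2 * (m - 1) * (-(a * (1 - a) * (2 - a)) * (1 + r) ^ (a - 3) / r) +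
        (m - 1) * (m - 3) * (a * (1 - a) * (1 + r) ^ (a - 2) / r ^ 2 -
          (1 - a * (1 + r) ^ (a - 1)) / r ^ 3)) := by
  have h1r : 0 < 1 + r := by linarith
  set P := (1 + r) ^ (a - 4)
  have hP : 0 < P := Real.rpow_pos_of_pos h1r _
  have hK : 0 < a * (1 - a) * (2 - a) := by have := mul_pos ha₀ (sub_pos.2 ha₁); nlinarith
  have hshift : (1 + r) ^ (a - 3) = (1 + r) * P := by
    rw [show a - 3 = 1 + (a - 4) by ring, Real.rpow_add h1r, Real.rpow_one]
  have hratio : 1 ≤ (1 + r) / r := by rw [le_div_iff₀ hr]; linarith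
  have hconvex :
      a * (1 - a) * (1 + r) ^ (a - 2) / r ^ 2 - (1 - a * (1 + r) ^ (a - 1)) / r ^ 3 ≤ 0 := by
    have := mul_weightProfile_deriv2_le_deriv ha₀.le ha₁.le hr.le
    rw [sub_nonpos, div_le_div_iff₀ (by positivity) (by positivity)]
    nlinarith [pow_pos hr 2]
  calc a * (1 - a) * P ≤ a * (1 - a) * (2 - a) * (1 + a) * P := by
        have := mul_pos (mul_pos ha₀ (sub_pos.2 ha₁)) hP
        nlinarith
    _ ≤ a * (1 - a) * (2 - a) * (2 * (m - 1) * ((1 + r) / r) - (3 - a)) * P := by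
        gcongr
        nlinarith
    _ = -(a * (1 - a) * (2 - a) * (3 - a) * P +
          2 * (m - 1) * (-(a * (1 - a) * (2 - a)) * (1 + r) ^ (a - 3) / r)) := by
        rw [hshift]; field_simp; ring
    _ ≤ _ := by nlinarith [mul_nonneg (show 0 ≤ m - 1 by linarith) (show 0 ≤ m - 3 by linarith)]

end WeightProfileBounds

section Weight

variable {n : ℕ} {a : ℝ} {x : EuclideanSpace ℝ (Fin n)}

theorem norm_mul_abs_lap_add_norm_grad_weightProfile_le (hn : 1 ≤ n) (ha₀ : 0 ≤ a) (ha₁ : a ≤ 1)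
    (hx : x ≠ 0) :
    ‖x‖ * |lap (fun y => weightProfile a ‖y‖) x| +
      √(∑ i, pd (fun y => weightProfile a ‖y‖) i x ^ 2) ≤ n + 1 := by
  have hr := norm_pos_iff.2 hx
  rw [lap_comp_norm (fun t ht => hasDerivAt_weightProfile (by linarith))
    (fun t ht => hasDerivAt_weightProfile_deriv (by linarith)) hx,
    sum_sq_pd_comp_norm (hasDerivAt_weightProfile (by linarith)) hx, Real.sqrt_sq_eq_abs]
  set r := ‖x‖
  have hD₂ : 0 ≤ a * (1 - a) * (1 + r) ^ (a - 2) :=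
    mul_nonneg (mul_nonneg ha₀ (by linarith)) (Real.rpow_nonneg (by linarith) _)
  have hrD₂ := mul_weightProfile_deriv2_le_deriv ha₀ ha₁ hr.le
  have hD₁ := weightProfile_deriv_le_one ha₀ hr.le
  have hD₁₀ : 0 ≤ 1 - a * (1 + r) ^ (a - 1) := le_trans (mul_nonneg hr.le hD₂) hrD₂
  have hn' : (1 : ℝ) ≤ n := by exact_mod_cast hn
  have hlap : r * (a * (1 - a) * (1 + r) ^ (a - 2) + (n - 1) * ((1 - a * (1 + r) ^ (a - 1)) / r)) =
      r * (a * (1 - a) * (1 + r) ^ (a - 2)) + (n - 1) * (1 - a * (1 + r) ^ (a - 1)) := by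
    field_simp
  rw [abs_of_nonneg (by positivity), abs_of_nonneg hD₁₀, hlap]
  nlinarith [mul_nonneg (sub_nonneg.2 hn') (sub_nonneg.2 hD₁)]

theorem le_hessForm_weightProfile (ha₀ : 0 ≤ a) (ha₁ : a ≤ 1) (hx : x ≠ 0)
    (v : EuclideanSpace ℝ (Fin n)) :
    a * (1 - a) * (1 + ‖x‖) ^ (a - 2) * ‖v‖ ^ 2 ≤ hessForm (fun y => weightProfile a ‖y‖) x v := by
  have hr := norm_pos_iff.2 hx
  refine le_hessForm_comp_norm (fun t ht => hasDerivAt_weightProfile (by linarith))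
    (fun t ht => hasDerivAt_weightProfile_deriv (by linarith)) hx ?_ v
  rw [le_div_iff₀ hr, mul_comm]
  exact mul_weightProfile_deriv2_le_deriv ha₀ ha₁ hr.le

theorem le_neg_lap_lap_weightProfile (hn : 3 ≤ n) (ha₀ : 0 < a) (ha₁ : a < 1) (hx : x ≠ 0) :
    a * (1 - a) * (1 + ‖x‖) ^ (a - 4) ≤
      -lap (fun y => lap (fun z => weightProfile a ‖z‖) y) x := by
  rw [lap_lap_comp_norm (fun t ht => hasDerivAt_weightProfile (by linarith))
    (fun t ht => hasDerivAt_weightProfile_deriv (by linarith))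
    (fun t ht => hasDerivAt_weightProfile_deriv2 (by linarith))
    (fun t ht => hasDerivAt_weightProfile_deriv3 (by linarith)) hx]
  exact weightProfile_neg_bilap_lower_bound (by exact_mod_cast hn) ha₀ ha₁ (norm_pos_iff.2 hx)

end Weight

/-- Key convexity computations for W(x) = |x| − (1+|x|)^{1−2σ} on ℝⁿ ∖ {0}, n ≥ 3,
0 < σ < 1/2: |x||ΔW| + |∇W| ≤ C, −Δ²W ≥ c⟨1+|x|⟩^{−3−2σ},
Hess(W) ≥ c(1+|x|)^{−1−2σ} Id as quadratic forms. -/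
theorem weight_convexity {n : ℕ} (hn : 3 ≤ n) (σ : ℝ) (hσ : 0 < σ) (hσ' : σ < 1/2)
    (W : EuclideanSpace ℝ (Fin n) → ℝ)
    (hW : ∀ x, W x = ‖x‖ - (1 + ‖x‖) ^ (1 - 2*σ)) :
    ∃ C c : ℝ, 0 < C ∧ 0 < c ∧ ∀ x : EuclideanSpace ℝ (Fin n), x ≠ 0 →
      (‖x‖ * |lap W x| + Real.sqrt (∑ i, (pd W i x) ^ 2) ≤ C)
      ∧ (-(lap (fun y => lap W y) x) ≥ c * (1 + ‖x‖) ^ (-3 - 2*σ))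
      ∧ (∀ v : EuclideanSpace ℝ (Fin n),
          (∑ j, ∑ k, pd (fun y => pd W k y) j x * v j * v k)
            ≥ c * (1 + ‖x‖) ^ (-1 - 2*σ) * ‖v‖ ^ 2) := by
  have ha₀ : 0 < 1 - 2 * σ := by linarith
  have ha₁ : 1 - 2 * σ < 1 := by linarith
  obtain rfl : W = fun y => weightProfile (1 - 2 * σ) ‖y‖ := funext hW
  refine ⟨n + 1, (1 - 2 * σ) * (1 - (1 - 2 * σ)), by positivity, mul_pos ha₀ (by linarith),
    fun x hx => ⟨?_, ?_, fun v => ?_⟩⟩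
  · exact norm_mul_abs_lap_add_norm_grad_weightProfile_le (by omega) ha₀.le ha₁.le hx
  · rw [show -3 - 2 * σ = 1 - 2 * σ - 4 by ring]
    exact le_neg_lap_lap_weightProfile hn ha₀ ha₁ hx
  · rw [show -1 - 2 * σ = 1 - 2 * σ - 2 by ring]
    exact le_hessForm_weightProfile ha₀.le ha₁.le hx v
end

section
/- Let Q(r) = R(r) + λM(r) − A(r) where M, R, A arise from a C² solution of v'' − L(L−1)r^{−2}v + λv = 0 with L ≥ 1, λ > 0 (M = |v|², R = |v'|², A = L(L−1)r^{−2}|v|²). If Q(r) → 0 as r → ∞ (along a sequence) then Q(r) ≤ 0 for all r, since Q' = (2/r)A ≥ 0. I.e., R + λM ≤ A everywhere. -/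
/-!
Along a solution of `v'' = (a / r ^ 2 - λ) v`, the energy `Q = |v'|² + λ|v|² - a r⁻²|v|²` has
`Q' = 2 a r⁻³ |v|²`: the terms coming from `v''` cancel against those from `|v|²`, and only the
explicit `r`-dependence of the potential survives. For `a = L(L-1) ≥ 0` this makes `Q` nondecreasing
on `(0, ∞)`, so `Q(r) ≤ Q(r_k)` for large `k`, and letting `k → ∞` gives `Q(r) ≤ 0`.
-/

open Filter Set

noncomputable def besselEnergy {E : Type*} [NormedAddCommGroup E] (a lam : ℝ) (v v' : ℝ → E)
    (r : ℝ) : ℝ :=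
  ‖v' r‖ ^ 2 + lam * ‖v r‖ ^ 2 - a / r ^ 2 * ‖v r‖ ^ 2

section Energy

variable {E : Type*} [NormedAddCommGroup E] [InnerProductSpace ℝ E] {a lam : ℝ}
  {v v' v'' : ℝ → E}

theorem hasDerivAt_besselEnergy {r : ℝ} (hr : r ≠ 0) (hv : HasDerivAt v (v' r) r)
    (hv' : HasDerivAt v' (v'' r) r) (hode : v'' r = (a / r ^ 2 - lam) • v r) :
    HasDerivAt (besselEnergy a lam v v') (2 * a / r ^ 3 * ‖v r‖ ^ 2) r := by
  have hcoeff : HasDerivAt (fun s => a / s ^ 2) _ r :=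
    (hasDerivAt_const r a).div (hasDerivAt_pow 2 r) (pow_ne_zero 2 hr)
  refine ((hv'.norm_sq.add (hv.norm_sq.const_mul lam)).sub (hcoeff.mul hv.norm_sq)).congr_deriv ?_
  rw [hode, inner_smul_right, real_inner_comm]
  field_simp
  ring

theorem monotoneOn_besselEnergy (ha : 0 ≤ a)
    (hv : ∀ r, 0 < r → HasDerivAt v (v' r) r) (hv' : ∀ r, 0 < r → HasDerivAt v' (v'' r) r)
    (hode : ∀ r, 0 < r → v'' r = (a / r ^ 2 - lam) • v r) :
    MonotoneOn (besselEnergy a lam v v') (Ioi 0) := by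
  have hderiv r (hr : 0 < r) :=
    hasDerivAt_besselEnergy hr.ne' (hv r hr) (hv' r hr) (hode r hr)
  refine monotoneOn_of_hasDerivWithinAt_nonneg (f' := fun r => 2 * a / r ^ 3 * ‖v r‖ ^ 2)
    (convex_Ioi 0) (fun r hr => (hderiv r hr).continuousAt.continuousWithinAt) ?_ ?_
  · rw [interior_Ioi]
    exact fun r hr => (hderiv r hr).hasDerivWithinAt
  · rw [interior_Ioi]
    intro r (hr : 0 < r)
    have := pow_pos hr 3
    positivity

end Energy

theorem MonotoneOn.le_of_tendsto_comp {α β ι : Type*} [LinearOrder α] [TopologicalSpace β]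
    [Preorder β] [ClosedIciTopology β] {f : α → β} {a x : α} {y : β} {l : Filter ι} [l.NeBot]
    {u : ι → α} (hf : MonotoneOn f (Ioi a)) (hx : a < x) (hu : Tendsto u l atTop)
    (hfu : Tendsto (f ∘ u) l (nhds y)) : f x ≤ y :=
  ge_of_tendsto hfu <| (hu.eventually_ge_atTop x).mono fun _ hk => hf hx (hx.trans_le hk) hk

theorem pohozaev_bound_general (L lam : ℝ) (hL : 1 ≤ L)
    (v v' v'' : ℝ → ℂ)
    (hd1 : ∀ r : ℝ, 0 < r → HasDerivAt v (v' r) r)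
    (hd2 : ∀ r : ℝ, 0 < r → HasDerivAt v' (v'' r) r)
    (hode : ∀ r : ℝ, 0 < r →
      v'' r - (L * (L - 1) / r ^ 2 : ℝ) * v r + (lam : ℂ) * v r = 0)
    (Q : ℝ → ℝ)
    (hQ : ∀ r, Q r = ‖v' r‖ ^ 2 + lam * ‖v r‖ ^ 2 - L * (L - 1) / r ^ 2 * ‖v r‖ ^ 2)
    (rk : ℕ → ℝ)
    (hrk : Tendsto rk atTop atTop)
    (hQ0 : Tendsto (fun k => Q (rk k)) atTop (nhds 0)) :
    ∀ r : ℝ, 0 < r → Q r ≤ 0 := by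
  obtain rfl : Q = besselEnergy (L * (L - 1)) lam v v' := funext hQ
  have hode' r (hr : 0 < r) : v'' r = (L * (L - 1) / r ^ 2 - lam) • v r := by
    rw [Complex.real_smul, Complex.ofReal_sub]
    linear_combination hode r hr
  have hmono := monotoneOn_besselEnergy (by nlinarith) hd1 hd2 hode'
  exact fun r hr => hmono.le_of_tendsto_comp hr hrk hQ0

/-- The Pohozaev bound (Lemma 10.5) in the model case: for Q = R + λM − A built from a
solution of the Bessel equation v'' − L(L−1)r^{−2}v + λv = 0 (L ≥ 1, λ > 0), if
Q(r_k) → 0 along some sequence r_k → ∞, then Q ≤ 0 everywhere, i.e. R + λM ≤ A. -/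
theorem pohozaev_bound (L lam : ℝ) (hL : 1 ≤ L) (hlam : 0 < lam)
    (v v' v'' : ℝ → ℂ)
    (hd1 : ∀ r : ℝ, 0 < r → HasDerivAt v (v' r) r)
    (hd2 : ∀ r : ℝ, 0 < r → HasDerivAt v' (v'' r) r)
    (hode : ∀ r : ℝ, 0 < r →
      v'' r - (L * (L - 1) / r ^ 2 : ℝ) * v r + (lam : ℂ) * v r = 0)
    (Q : ℝ → ℝ)
    (hQ : ∀ r, Q r = ‖v' r‖ ^ 2 + lam * ‖v r‖ ^ 2 - L * (L - 1) / r ^ 2 * ‖v r‖ ^ 2)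
    (rk : ℕ → ℝ)
    (hrk : Tendsto rk atTop atTop) (hrkpos : ∀ k, 0 < rk k)
    (hQ0 : Tendsto (fun k => Q (rk k)) atTop (nhds 0)) :
    ∀ r : ℝ, 0 < r → Q r ≤ 0 :=
  pohozaev_bound_general L lam hL v v' v'' hd1 hd2 hode Q hQ rk hrk hQ0
end
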